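/- arXiv:2005.09628 — 5 statements merged into one kernel-verified Lean document; each statement's English description precedes it below -/
import Mathlib

section
/- The Newton polytope of the Schur polynomial s_λ(x_1,...,x_m) equals the λ-permutohedron, i.e., the convex hull of the S_m-orbit of the point (λ_1,...,λ_m) in ℝ^m. -/
/-- A semistandard Young tableau of shape `lam` (a partition with at most `m` parts)
with entries in `{1, ..., m}`: rows weakly increase, columns strictly increase. -/
structure SSYT (m : ℕ) (lam : Fin m → ℕ) where
  entry : Fin m → ℕ → ℕ
  one_le : ∀ i j, j < lam i → 1 ≤ entry i j
  le_m : ∀ i j, j < lam i → entry i j ≤ m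
  row_weak : ∀ i j k, j ≤ k → k < lam i → entry i j ≤ entry i k
  col_strict : ∀ i k : Fin m, ∀ j, i < k → j < lam i → j < lam k → entry i j < entry k j

/-- The content vector of a tableau: `content T v` is the number of cells whose
entry equals `v + 1` (entries are `1, ..., m`). -/
def SSYT.content {m : ℕ} {lam : Fin m → ℕ} (T : SSYT m lam) : Fin m → ℕ :=
  fun v => ∑ i : Fin m, ((Finset.range (lam i)).filter (fun j => T.entry i j = v.1 + 1)).card

/-!
Each column of a tableau of shape `λ` has strictly increasing entries, so the content is the sum
over the columns of the indicator vectors of their entry sets, whose sizes are the column heights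
of `λ`. For a weight vector `w`, such an indicator weighs at most the sum of the largest weights,
one per cell; ordering the coordinates by decreasing `w` attains all these column maxima at once,
at a single permutation of `λ`. Hence no linear functional separates a content from the
permutohedron. Conversely, listing `{v | j < λ (σ v)}` increasingly in column `j` gives a
semistandard tableau (the key of `σ`) with content `λ ∘ σ`.
-/

open Finset

theorem Finset.sum_le_sum_of_isLowerSet {α M : Type*} [LinearOrder α] [AddCommMonoid M]
    [PartialOrder M] [IsOrderedAddMonoid M] {u : α → M} (hu : Antitone u) {s t : Finset α}
    (ht : IsLowerSet (t : Set α)) (hst : #s = #t) :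
    ∑ a ∈ s, u a ≤ ∑ a ∈ t, u a := by
  rw [← sum_inter_add_sum_sdiff s t u, ← sum_inter_add_sum_sdiff t s u, inter_comm]
  refine add_le_add_right ?_ _
  obtain h | hne := (s \ t).eq_empty_or_nonempty
  · rw [h, card_eq_zero.1 ((card_sdiff_comm hst).symm.trans (by rw [h, card_empty]))]
  set a₀ := (s \ t).min' hne
  have hlt : ∀ b ∈ t \ s, b < a₀ := fun b hb => by
    by_contra! h
    exact (mem_sdiff.1 ((s \ t).min'_mem hne)).2 (ht h (mem_sdiff.1 hb).1)
  calc ∑ a ∈ s \ t, u a ≤ #(s \ t) • u a₀ :=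
        sum_le_card_nsmul _ _ _ fun a ha => hu ((s \ t).min'_le a ha)
    _ = #(t \ s) • u a₀ := by rw [card_sdiff_comm hst]
    _ ≤ ∑ b ∈ t \ s, u b := card_nsmul_le_sum _ _ _ fun b hb => hu (hlt b hb).le

theorem exists_perm_antitone_comp {n : ℕ} {α : Type*} [LinearOrder α] (w : Fin n → α) :
    ∃ π : Equiv.Perm (Fin n), Antitone (w ∘ π) :=
  ⟨Tuple.sort (OrderDual.toDual ∘ w), monotone_toDual_comp_iff.1 (Tuple.monotone_sort _)⟩

theorem mem_convexHull_of_forall_exists_le {ι : Type*} [Fintype ι] {s : Set (ι → ℝ)}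
    (hs : s.Finite) {x : ι → ℝ} (h : ∀ w : ι → ℝ, ∃ y ∈ s, ∑ i, w i * x i ≤ ∑ i, w i * y i) :
    x ∈ convexHull ℝ s := by
  classical
  by_contra hx
  obtain ⟨f, u, hf, hfx⟩ := geometric_hahn_banach_closed_point (convex_convexHull ℝ s)
    (hs.isCompact_convexHull (𝕜 := ℝ)).isClosed hx
  let w : ι → ℝ := fun i => f fun j => if i = j then 1 else 0
  have hf_eq (y : ι → ℝ) : f y = ∑ i, w i * y i := by
    have := (f : (ι → ℝ) →ₗ[ℝ] ℝ).pi_apply_eq_sum_univ y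
    simp only [smul_eq_mul, mul_comm (y _)] at this
    exact this
  obtain ⟨y, hy, hxy⟩ := h w
  have := hf y (subset_convexHull ℝ s hy)
  rw [← hf_eq, ← hf_eq] at hxy
  linarith

theorem Finset.sum_card_filter_mem_nsmul {ι κ M : Type*} [Fintype ι] [DecidableEq ι]
    [AddCommMonoid M] (J : Finset κ) (A : κ → Finset ι) (w : ι → M) :
    ∑ v, #{j ∈ J | v ∈ A j} • w v = ∑ j ∈ J, ∑ v ∈ A j, w v := by
  simp_rw [card_eq_sum_ones, sum_smul, one_smul, sum_filter]
  rw [sum_comm]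
  simp

theorem Finset.card_filter_range_lt {a N : ℕ} (h : a ≤ N) : #{j ∈ range N | j < a} = a := by
  rw [show {j ∈ range N | j < a} = range a by ext; simp; omega, card_range]

theorem Nat.nth_le_nth_of_imp {p q : ℕ → Prop} (hqp : ∀ n, q n → p n) {i : ℕ}
    (hi : ∀ hf : (Set.ofPred q).Finite, i < #hf.toFinset) : Nat.nth p i ≤ Nat.nth q i := by
  classical
  refine Nat.lt_succ_iff.1 (Nat.nth_lt_of_lt_count ?_)
  calc i < Nat.count q (Nat.nth q i + 1) := by rw [Nat.count_nth_succ hi]; omega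
    _ ≤ Nat.count p (Nat.nth q i + 1) := Nat.count_mono_left fun k _ => hqp k

namespace SSYT

variable {m : ℕ} {lam : Fin m → ℕ}

theorem entry_injective_of_col (T : SSYT m lam) {i k : Fin m} {j : ℕ} (hi : j < lam i)
    (hk : j < lam k) (h : T.entry i j = T.entry k j) : i = k := by
  rcases lt_trichotomy i k with hik | rfl | hki
  · exact absurd h (T.col_strict i k j hik hi hk).ne
  · rfl
  · exact absurd h (T.col_strict k i j hki hk hi).ne'

def column (T : SSYT m lam) (j : ℕ) : Finset (Fin m) :=
  {v | ∃ i, j < lam i ∧ T.entry i j = v + 1}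

theorem card_column (T : SSYT m lam) (j : ℕ) : #(T.column j) = #{i | j < lam i} := by
  symm
  refine card_bij (fun i hi => ⟨T.entry i j - 1, ?_⟩) ?_ ?_ ?_
  · have := T.le_m i j (by simpa using hi)
    have := T.one_le i j (by simpa using hi)
    omega
  · intro i hi
    simp only [mem_filter, mem_univ, true_and, column] at hi ⊢
    exact ⟨i, hi, by have := T.one_le i j hi; omega⟩
  · intro i hi k hk h
    simp only [mem_filter, mem_univ, true_and, Fin.mk.injEq] at hi hk h
    have := T.one_le i j hi
    have := T.one_le k j hk
    exact T.entry_injective_of_col hi hk (by omega)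
  · intro v hv
    obtain ⟨i, hi, he⟩ := by simpa [column] using hv
    exact ⟨i, by simpa using hi, Fin.ext (by simp [he])⟩

theorem content_eq_card_filter_mem_column (T : SSYT m lam) {N : ℕ} (hN : ∀ i, lam i ≤ N)
    (v : Fin m) : T.content v = #{j ∈ range N | v ∈ T.column j} := by
  rw [content, ← card_sigma]
  refine card_bij (fun c _ => c.2) ?_ ?_ ?_
  · rintro ⟨i, j⟩ hc
    simp only [mem_sigma, mem_univ, mem_filter, mem_range, true_and, column] at hc ⊢
    exact ⟨hc.1.trans_le (hN i), i, hc⟩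
  · rintro ⟨i, j⟩ hc ⟨k, j'⟩ hc' (rfl : j = j')
    simp only [mem_sigma, mem_univ, mem_filter, mem_range, true_and] at hc hc'
    obtain rfl := T.entry_injective_of_col hc.1 hc'.1 (hc.2.trans hc'.2.symm)
    rfl
  · intro j hj
    obtain ⟨-, i, hi, he⟩ := by simpa [column] using hj
    exact ⟨⟨i, j⟩, by simpa using ⟨hi, he⟩, rfl⟩

theorem exists_perm_sum_content_nsmul_le (hlam : Antitone lam) (T : SSYT m lam) {M : Type*}
    [AddCommMonoid M] [LinearOrder M] [IsOrderedAddMonoid M] (w : Fin m → M) :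
    ∃ σ : Equiv.Perm (Fin m), ∑ v, T.content v • w v ≤ ∑ v, lam (σ v) • w v := by
  obtain ⟨π, hπ⟩ := exists_perm_antitone_comp w
  have hN (i : Fin m) : lam i ≤ univ.sup lam := le_sup (mem_univ i)
  refine ⟨π.symm, ?_⟩
  calc ∑ v, T.content v • w v = ∑ j ∈ range (univ.sup lam), ∑ v ∈ T.column j, w v := by
        simp_rw [T.content_eq_card_filter_mem_column hN, sum_card_filter_mem_nsmul]
    _ ≤ ∑ j ∈ range (univ.sup lam), ∑ i ∈ {i | j < lam i}, w (π i) :=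
        sum_le_sum fun j _ => ?_
    _ = ∑ i, lam i • w (π i) := by
        rw [← sum_card_filter_mem_nsmul]
        simp_rw [mem_filter, mem_univ, true_and, card_filter_range_lt (hN _)]
    _ = ∑ v, lam (π.symm v) • w v := by
        simpa using Equiv.sum_comp π fun v => lam (π.symm v) • w v
  calc ∑ v ∈ T.column j, w v = ∑ a ∈ (T.column j).map π.symm.toEmbedding, w (π a) := by
        simp [sum_map]
    _ ≤ ∑ i ∈ {i | j < lam i}, w (π i) :=
        sum_le_sum_of_isLowerSet hπ (fun a b hba ha => by
          simp only [coe_filter, mem_univ, true_and, Set.mem_ofPred_eq] at ha ⊢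
          exact ha.trans_le (hlam hba)) (by rw [card_map, card_column])

theorem content_mem_convexHull_perm (hlam : Antitone lam) (T : SSYT m lam) :
    (fun v => (T.content v : ℝ)) ∈
      convexHull ℝ {x : Fin m → ℝ | ∃ σ : Equiv.Perm (Fin m), x = fun i => (lam (σ i) : ℝ)} := by
  refine mem_convexHull_of_forall_exists_le
    ((Set.finite_range fun σ : Equiv.Perm (Fin m) => fun i => (lam (σ i) : ℝ)).subset ?_)
    fun w => ?_
  · rintro _ ⟨σ, rfl⟩
    exact ⟨σ, rfl⟩
  obtain ⟨σ, hσ⟩ := T.exists_perm_sum_content_nsmul_le hlam w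
  exact ⟨_, ⟨σ, rfl⟩, by simpa [nsmul_eq_mul, mul_comm] using hσ⟩

section Key

variable (α : Fin m → ℕ)

-- `{v | j < α v}` as a predicate on `ℕ`, so that `Nat.nth` enumerates it increasingly.
def keyColumn (j n : ℕ) : Prop := ∃ h : n < m, j < α ⟨n, h⟩

instance (j : ℕ) : DecidablePred (keyColumn α j) := fun n =>
  inferInstanceAs (Decidable (∃ h : n < m, j < α ⟨n, h⟩))

variable {α}

theorem count_keyColumn (j : ℕ) : Nat.count (keyColumn α j) m = #{v | j < α v} := by
  rw [Nat.count_eq_card_filter_range, ← card_map Fin.valEmbedding]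
  refine congrArg card (Finset.ext fun n => ?_)
  simp only [mem_filter, mem_range, mem_map, Fin.valEmbedding_apply, mem_univ, true_and]
  constructor
  · rintro ⟨-, hn, hj⟩
    exact ⟨⟨n, hn⟩, hj, rfl⟩
  · rintro ⟨v, hv, rfl⟩
    exact ⟨v.isLt, v.isLt, hv⟩

theorem lt_lam_iff_lt_count_keyColumn (hlam : Antitone lam)
    (hα : ∀ j, #{v | j < α v} = #{i | j < lam i}) {i : Fin m} {j : ℕ} :
    j < lam i ↔ (i : ℕ) < Nat.count (keyColumn α j) m := by
  rw [count_keyColumn, hα, Fin.lt_card_filter_univ_iff_apply_of_imp _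
    fun a b hba ha => ha.trans_le (hlam hba)]

theorem lt_card_keyColumn (hlam : Antitone lam) (hα : ∀ j, #{v | j < α v} = #{i | j < lam i})
    {i : Fin m} {j : ℕ} (hj : j < lam i) (hf : (Set.ofPred (keyColumn α j)).Finite) :
    (i : ℕ) < #hf.toFinset :=
  ((lt_lam_iff_lt_count_keyColumn hlam hα).1 hj).trans_le (Nat.count_le_card hf m)

variable (hlam : Antitone lam) (hα : ∀ j, #{v | j < α v} = #{i | j < lam i})

noncomputable def key : SSYT m lam where
  entry i j := Nat.nth (keyColumn α j) i + 1
  one_le _ _ _ := Nat.le_add_left _ _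
  le_m _ _ hj := Nat.nth_lt_of_lt_count ((lt_lam_iff_lt_count_keyColumn hlam hα).1 hj)
  row_weak _ _ _ hjk hk := Nat.add_le_add_right (Nat.nth_le_nth_of_imp
    (fun _ ⟨hn, hkn⟩ => ⟨hn, hjk.trans_lt hkn⟩) (lt_card_keyColumn hlam hα hk)) 1
  col_strict _ _ _ hik _ hk :=
    Nat.add_lt_add_right (Nat.nth_lt_nth' hik (lt_card_keyColumn hlam hα hk)) 1

theorem key_entry (i : Fin m) (j : ℕ) :
    (key hlam hα).entry i j = Nat.nth (keyColumn α j) i + 1 := rfl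

theorem column_key (j : ℕ) : (key hlam hα).column j = ({v | j < α v} : Finset (Fin m)) := by
  refine Finset.ext fun v => ?_
  simp only [column, key_entry, mem_filter, mem_univ, true_and, Nat.add_right_cancel_iff]
  constructor
  · rintro ⟨i, hi, he⟩
    obtain ⟨_, h⟩ := he ▸ Nat.nth_mem (p := keyColumn α j) i (lt_card_keyColumn hlam hα hi)
    exact h
  · intro hv
    have hp : keyColumn α j v := ⟨v.isLt, hv⟩
    have hlt := Nat.count_strict_mono hp v.isLt
    exact ⟨⟨_, hlt.trans_le (Nat.count_le _)⟩, (lt_lam_iff_lt_count_keyColumn hlam hα).2 hlt,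
      Nat.nth_count hp⟩

theorem content_key : (key hlam hα).content = α := by
  funext v
  rw [content_eq_card_filter_mem_column _ (N := univ.sup lam ⊔ univ.sup α)
    fun i => le_sup_of_le_left (le_sup (mem_univ i))]
  simp_rw [column_key, mem_filter, mem_univ, true_and]
  exact card_filter_range_lt (le_sup_of_le_right (le_sup (mem_univ v)))

end Key

end SSYT

/-- The Newton polytope of the Schur polynomial `s_λ(x_1, ..., x_m)` (the convex hull
of the content vectors of semistandard Young tableaux of shape `λ` with entries in `[m]`)
equals the `λ`-permutohedron: the convex hull of the `S_m`-orbit of `(λ_1, ..., λ_m)`. -/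
theorem newton_schur_eq_permutohedron (m : ℕ) (lam : Fin m → ℕ) (hlam : Antitone lam) :
    convexHull ℝ {x : Fin m → ℝ | ∃ T : SSYT m lam, x = fun v => (T.content v : ℝ)} =
      convexHull ℝ {x : Fin m → ℝ | ∃ σ : Equiv.Perm (Fin m), x = fun i => (lam (σ i) : ℝ)} := by
  refine (convexHull_min ?_ (convex_convexHull ℝ _)).antisymm (convexHull_mono ?_)
  · rintro _ ⟨T, rfl⟩
    exact T.content_mem_convexHull_perm hlam
  · rintro _ ⟨σ, rfl⟩
    have hσ (j : ℕ) : #{v | j < lam (σ v)} = #{i | j < lam i} := card_equiv σ (by simp)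
    exact ⟨SSYT.key hlam hσ, by rw [SSYT.content_key]⟩
end

section
/- The λ-permutohedron P_λ^m has the integer decomposition property: for every positive integer t and every lattice point p ∈ tP_λ^m ∩ ℤ^m, there exist lattice points v_1, ..., v_t ∈ P_λ^m ∩ ℤ^m with p = v_1 + ... + v_t. -/
open scoped Pointwise

/-- The `λ`-permutohedron `P_λ^m ⊂ ℝ^m`: the convex hull of all coordinate
permutations of the vector `(λ_1, ..., λ_m)`. -/
def permPoly (m : ℕ) (lam : Fin m → ℕ) : Set (Fin m → ℝ) :=
  convexHull ℝ {x : Fin m → ℝ | ∃ σ : Equiv.Perm (Fin m), x = fun i => (lam (σ i) : ℝ)}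

/-!
By Rado's theorem the lattice points of `P_λ` are the integer vectors majorized by `λ`, and a
lattice point `p` of `t P_λ` is majorized by `tλ`. If `q` is majorized by a partition `Λ` with `K`
nonzero parts, lowering the `K` largest entries of `q` by one leaves a vector majorized by
`(Λ - 1)⁺` (a Gale–Ryser step). Doing this `t` times to `p` removes `K`-sets `T_1, …, T_t` and
leaves a vector majorized by `t (λ - 1)⁺`; by induction on the largest part it splits as
`w_1 + ⋯ + w_t` with `w_a` majorized by `(λ - 1)⁺`, and then `w_a + 1_{T_a}` is majorized by `λ`.

Rado's theorem is proved by transfers: a sorted `x` majorized by `y` is reached from `y` by moving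
mass from a coordinate where `y` exceeds `x` to a later one where `x` exceeds `y`, and each such
move is a convex combination of `y` and a transposition of `y`.
-/

open Finset

/-- For antitone `Λ`, this is majorization of `x` by `(Λ 0, …, Λ (card ι - 1))`. -/
structure IsMajorizedBy {ι R : Type*} [Fintype ι] [AddCommMonoid R] [LE R]
    (x : ι → R) (Λ : ℕ → R) : Prop where
  sum_le : ∀ S : Finset ι, ∑ i ∈ S, x i ≤ ∑ n ∈ range #S, Λ n
  sum_eq : ∑ i, x i = ∑ n ∈ range (Fintype.card ι), Λ n

section Majorization

variable {ι : Type*} [Fintype ι]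

lemma IsMajorizedBy.smul {R : Type*} [Semiring R] [PartialOrder R] [IsOrderedRing R]
    {x : ι → R} {Λ : ℕ → R} (h : IsMajorizedBy x Λ) {c : R} (hc : 0 ≤ c) :
    IsMajorizedBy (c • x) (c • Λ) where
  sum_le S := by simpa [← mul_sum] using mul_le_mul_of_nonneg_left (h.sum_le S) hc
  sum_eq := by simp [← mul_sum, h.sum_eq]

lemma IsMajorizedBy.intCast_iff {R : Type*} [Ring R] [PartialOrder R] [IsStrictOrderedRing R]
    {x : ι → ℤ} {Λ : ℕ → ℤ} :
    IsMajorizedBy (fun i => (x i : R)) (fun n => (Λ n : R)) ↔ IsMajorizedBy x Λ := by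
  constructor
  · rintro ⟨hle, heq⟩
    exact ⟨fun S => by exact_mod_cast hle S, by exact_mod_cast heq⟩
  · rintro ⟨hle, heq⟩
    exact ⟨fun S => by exact_mod_cast hle S, by exact_mod_cast heq⟩

lemma convex_setOf_isMajorizedBy {𝕜 : Type*} [Field 𝕜] [LinearOrder 𝕜] [IsStrictOrderedRing 𝕜]
    (Λ : ℕ → 𝕜) : Convex 𝕜 {x : ι → 𝕜 | IsMajorizedBy x Λ} := by
  intro x hx y hy a b ha hb hab
  refine ⟨fun S => ?_, ?_⟩
  · simp only [Pi.add_apply, Pi.smul_apply, smul_eq_mul, sum_add_distrib, ← mul_sum]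
    calc a * ∑ i ∈ S, x i + b * ∑ i ∈ S, y i
        ≤ a * ∑ n ∈ range #S, Λ n + b * ∑ n ∈ range #S, Λ n := by
          gcongr
          exacts [hx.sum_le S, hy.sum_le S]
      _ = _ := by rw [← add_mul, hab, one_mul]
  · simp only [Pi.add_apply, Pi.smul_apply, smul_eq_mul, sum_add_distrib, ← mul_sum, hx.sum_eq,
      hy.sum_eq, ← add_mul, hab, one_mul]

end Majorization

lemma sum_le_sum_range_card_of_antitone {R : Type*} [AddCommMonoid R] [PartialOrder R]
    [IsOrderedAddMonoid R] {Λ : ℕ → R} (hΛ : Antitone Λ) (S : Finset ℕ) :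
    ∑ n ∈ S, Λ n ≤ ∑ n ∈ range #S, Λ n := by
  induction S using Finset.induction_on_max with
  | empty => simp
  | insert a S ha ih =>
    have hSa : #S ≤ a := by simpa using card_le_card fun n hn => mem_range.2 (ha n hn)
    rw [sum_insert fun h => (ha a h).false, card_insert_of_notMem fun h => (ha a h).false,
      sum_range_succ, add_comm]
    exact add_le_add ih (hΛ hSa)

lemma Fin.sum_Iic_val {R : Type*} [AddCommMonoid R] {m : ℕ} (f : ℕ → R) (l : Fin m) :
    ∑ i ∈ Iic l, f i = ∑ n ∈ range (l + 1), f n := by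
  rw [Nat.range_succ_eq_Iic, ← Fin.map_valEmbedding_Iic, sum_map]
  rfl

section Transfer

variable {ι : Type*}

def permSet (y : ι → ℝ) : Set (ι → ℝ) := Set.range fun σ : Equiv.Perm ι => y ∘ σ

lemma mem_permSet_self (y : ι → ℝ) : y ∈ permSet y := ⟨1, rfl⟩

lemma convexHull_permSet_subset {y z : ι → ℝ} (hz : z ∈ convexHull ℝ (permSet y)) :
    convexHull ℝ (permSet z) ⊆ convexHull ℝ (permSet y) := by
  refine convexHull_min ?_ (convex_convexHull ℝ _)
  rintro _ ⟨σ, rfl⟩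
  have hσ : LinearMap.funLeft ℝ ℝ σ '' permSet y ⊆ permSet y := by
    rintro _ ⟨_, ⟨τ, rfl⟩, rfl⟩
    exact ⟨σ.trans τ, rfl⟩
  have := Set.mem_image_of_mem (LinearMap.funLeft ℝ ℝ σ) hz
  rw [LinearMap.image_convexHull] at this
  exact convexHull_mono hσ this

variable [DecidableEq ι]

lemma add_single_sub_single_mem_convexHull_permSet (y : ι → ℝ) {j k : ι} (hjk : j ≠ k)
    {δ : ℝ} (hδ : 0 ≤ δ) (hδy : δ ≤ y j - y k) :
    y + Pi.single k δ - Pi.single j δ ∈ convexHull ℝ (permSet y) := by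
  rcases hδ.eq_or_lt with rfl | hδ
  · simpa using subset_convexHull ℝ _ (mem_permSet_self y)
  set c := δ / (y j - y k)
  have hd : 0 < y j - y k := hδ.trans_le hδy
  have hcombo : y + Pi.single k δ - Pi.single j δ = (1 - c) • y + c • (y ∘ Equiv.swap j k) := by
    funext i
    simp only [Pi.add_apply, Pi.sub_apply, Pi.smul_apply, smul_eq_mul, Function.comp_apply,
      Pi.single_apply]
    by_cases hij : i = j
    · subst hij; simp [hjk, c]; field_simp; ring
    by_cases hik : i = k
    · subst hik; simp [hij, c]; field_simp; ring
    simp [hij, hik, Equiv.swap_apply_of_ne_of_ne hij hik]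
    ring
  rw [hcombo]
  exact convex_convexHull ℝ _ (subset_convexHull ℝ _ (mem_permSet_self y))
    (subset_convexHull ℝ _ ⟨Equiv.swap j k, rfl⟩) (sub_nonneg.2 ((div_le_one hd).2 hδy))
    (by positivity) (by ring)

variable [Fintype ι]

lemma card_filter_ne_lt {x y y' : ι → ℝ} {j k : ι} (hj : x j ≠ y j) (hk : x k ≠ y k)
    (hy' : ∀ i, i ≠ j → i ≠ k → y' i = y i) (hfix : x j = y' j ∨ x k = y' k) :
    #{i | x i ≠ y' i} < #{i | x i ≠ y i} := by
  apply card_lt_card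
  rw [ssubset_iff_of_subset]
  · rcases hfix with hfix | hfix
    · exact ⟨j, by simpa using hj, by simpa using hfix⟩
    · exact ⟨k, by simpa using hk, by simpa using hfix⟩
  · intro i
    simp only [mem_filter, mem_univ, true_and]
    by_cases hij : i = j
    · exact fun _ => hij ▸ hj
    by_cases hik : i = k
    · exact fun _ => hik ▸ hk
    rw [hy' i hij hik]
    exact id

variable [LinearOrder ι] [LocallyFiniteOrderBot ι]

/-- Take `k` the first coordinate with `y k < x k` and `j < k` with `x j < y j`; the transfer
`δ` keeps `x ≤ y'` before `k`, and `x` antitone gives `2δ ≤ y j - y k`. -/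
lemma exists_transfer_of_ne {x y : ι → ℝ} (hx : Antitone x)
    (hpre : ∀ l, ∑ i ∈ Iic l, x i ≤ ∑ i ∈ Iic l, y i) (htot : ∑ i, x i = ∑ i, y i)
    (hne : x ≠ y) :
    ∃ y' ∈ convexHull ℝ (permSet y), (∀ l, ∑ i ∈ Iic l, x i ≤ ∑ i ∈ Iic l, y' i) ∧
      ∑ i, x i = ∑ i, y' i ∧ #{i | x i ≠ y' i} < #{i | x i ≠ y i} := by
  obtain ⟨k₀, hk₀⟩ : ∃ k, y k < x k := by
    by_contra! h
    exact hne (funext fun i => (sum_eq_sum_iff_of_le fun i _ => h i).1 htot i (mem_univ i))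
  obtain ⟨k, hk, hkmin⟩ := exists_min_image {i | y i < x i} id ⟨k₀, by simpa using hk₀⟩
  replace hk : y k < x k := (mem_filter.1 hk).2
  have hbelow : ∀ i < k, x i ≤ y i := fun i hi => not_lt.1 fun h =>
    (hkmin i (mem_filter.2 ⟨mem_univ i, h⟩)).not_gt hi
  obtain ⟨j, hj, hxj⟩ : ∃ j ∈ Iio k, x j < y j := by
    apply exists_lt_of_sum_lt
    have := hpre k
    rw [← Iio_insert, sum_insert (by simp), sum_insert (by simp)] at this
    linarith
  rw [mem_Iio] at hj
  set δ := min (y j - x j) (x k - y k)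
  have hδj : δ ≤ y j - x j := min_le_left _ _
  have hδk : δ ≤ x k - y k := min_le_right _ _
  have hδ : 0 < δ := lt_min (by linarith) (by linarith)
  have hδy : δ ≤ y j - y k := by linarith [hx hj.le]
  set y' := y + Pi.single k δ - Pi.single j δ
  have hsum' : ∀ s : Finset ι, ∑ i ∈ s, y' i
      = ∑ i ∈ s, y i + (if k ∈ s then δ else 0) - (if j ∈ s then δ else 0) := by
    simp [y', sum_sub_distrib, sum_add_distrib, sum_pi_single']
  have hfix : x j = y' j ∨ x k = y' k := by
    rcases min_choice (y j - x j) (x k - y k) with h | h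
    · left; simp [y', hj.ne']; linarith [show δ = y j - x j from h]
    · right; simp [y', hj.ne']; linarith [show δ = x k - y k from h]
  refine ⟨y', add_single_sub_single_mem_convexHull_permSet y hj.ne hδ.le hδy, fun l => ?_, ?_,
    card_filter_ne_lt hxj.ne hk.ne' (fun i hij hik => by simp [y', hij, hik]) hfix⟩
  · rcases lt_or_ge l k with hlk | hkl
    · refine sum_le_sum fun i hi => ?_
      have hik : i < k := (mem_Iic.1 hi).trans_lt hlk
      simp only [y', Pi.add_apply, Pi.sub_apply, Pi.single_apply, if_neg hik.ne]
      split_ifs with hij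
      · subst hij; linarith
      · linarith [hbelow i hik]
    · rw [hsum', if_pos (mem_Iic.2 hkl), if_pos (mem_Iic.2 (hj.le.trans hkl))]
      linarith [hpre l]
  · rw [hsum', if_pos (mem_univ k), if_pos (mem_univ j), htot]
    ring

lemma mem_convexHull_permSet_of_antitone {x y : ι → ℝ} (hx : Antitone x)
    (hpre : ∀ l, ∑ i ∈ Iic l, x i ≤ ∑ i ∈ Iic l, y i) (htot : ∑ i, x i = ∑ i, y i) :
    x ∈ convexHull ℝ (permSet y) := by
  induction hN : #{i | x i ≠ y i} using Nat.strong_induction_on generalizing y with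
  | _ N ih =>
    by_cases hxy : x = y
    · exact hxy ▸ subset_convexHull ℝ _ (mem_permSet_self x)
    obtain ⟨y', hy', hpre', htot', hlt⟩ := exists_transfer_of_ne hx hpre htot hxy
    exact convexHull_permSet_subset hy' (ih _ (hN ▸ hlt) hpre' htot' rfl)

end Transfer

section Rado

variable {m : ℕ} {Λ : ℕ → ℝ}

lemma isMajorizedBy_of_mem_convexHull_permSet (hΛ : Antitone Λ) {x : Fin m → ℝ}
    (hx : x ∈ convexHull ℝ (permSet fun i : Fin m => Λ i)) : IsMajorizedBy x Λ := by
  refine convexHull_min ?_ (convex_setOf_isMajorizedBy Λ) hx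
  rintro _ ⟨σ, rfl⟩
  refine ⟨fun S => ?_, ?_⟩
  · simpa using
      sum_le_sum_range_card_of_antitone hΛ (S.map (σ.toEmbedding.trans Fin.valEmbedding))
  · simp [Equiv.sum_comp σ (fun i : Fin m => Λ i), Fin.sum_univ_eq_sum_range]

lemma mem_convexHull_permSet_of_isMajorizedBy {x : Fin m → ℝ} (hx : IsMajorizedBy x Λ) :
    x ∈ convexHull ℝ (permSet fun i : Fin m => Λ i) := by
  set σ := Tuple.sort (OrderDual.toDual ∘ x)
  have hsorted : Antitone (x ∘ σ) := Tuple.monotone_sort (OrderDual.toDual ∘ x)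
  have hpre : ∀ l, ∑ i ∈ Iic l, (x ∘ σ) i ≤ ∑ i ∈ Iic l, Λ i := fun l => by
    have := hx.sum_le ((Iic l).map σ.toEmbedding)
    rwa [sum_map, card_map, Fin.card_Iic, ← Fin.sum_Iic_val] at this
  have htot : ∑ i, (x ∘ σ) i = ∑ i : Fin m, Λ i := by
    have := hx.sum_eq
    rw [Fintype.card_fin] at this
    rw [Fin.sum_univ_eq_sum_range, ← this]
    exact Equiv.sum_comp σ x
  have hx' : x ∈ permSet (x ∘ σ) := ⟨σ⁻¹, by ext; simp⟩
  exact convexHull_permSet_subset (mem_convexHull_permSet_of_antitone hsorted hpre htot)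
    (subset_convexHull ℝ _ hx')

end Rado

section Peeling

variable {ι : Type*} [DecidableEq ι] {Λ : ℕ → ℤ} {K : ℕ}

lemma sum_range_eq_sum_range_of_le (hzero : ∀ n, K ≤ n → Λ n = 0) {k : ℕ} (hk : K ≤ k) :
    ∑ n ∈ range k, Λ n = ∑ n ∈ range K, Λ n :=
  (sum_subset (range_subset_range.2 hk) fun n _ hn => hzero n (by simpa using hn)).symm

lemma sum_range_eq_sum_range_max_sub_one_add_min (hpos : ∀ n < K, 1 ≤ Λ n)
    (hzero : ∀ n, K ≤ n → Λ n = 0) (k : ℕ) :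
    ∑ n ∈ range k, Λ n = ∑ n ∈ range k, max (Λ n - 1) 0 + min k K := by
  have hsplit : ∀ n, Λ n = max (Λ n - 1) 0 + if n < K then 1 else 0 := fun n => by
    split_ifs with h
    · have := hpos n h; omega
    · have := hzero n (not_lt.1 h); omega
  have hfilter : ({n ∈ range k | n < K} : Finset ℕ) = range (min k K) := by
    ext n; simp
  rw [sum_congr rfl fun n _ => hsplit n, sum_add_distrib, sum_boole, hfilter, card_range]

lemma sum_indicator_eq_card_inter (S T : Finset ι) :
    ∑ i ∈ S, (if i ∈ T then 1 else 0 : ℤ) = #(S ∩ T) := by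
  rw [sum_boole, filter_mem_eq_inter]

variable {q : ι → ℤ} {S T : Finset ι}

lemma sum_add_le_of_le_card (hq : ∀ S : Finset ι, ∑ i ∈ S, q i ≤ ∑ n ∈ range #S, Λ n)
    (hzero : ∀ n, K ≤ n → Λ n = 0) (hT : #T = K) (hTq : ∀ i ∈ T, 1 ≤ q i) (hS : K ≤ #S) :
    ∑ i ∈ S, q i + K ≤ ∑ n ∈ range #S, Λ n + #(S ∩ T) := by
  have hunion := hq (S ∪ T)
  rw [← union_sdiff_self_eq_union, sum_union disjoint_sdiff,
    sum_range_eq_sum_range_of_le hzero (hS.trans (card_le_card subset_union_left)),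
    ← sum_range_eq_sum_range_of_le hzero hS] at hunion
  have hout : #(T \ S) ≤ ∑ i ∈ T \ S, q i := by
    simpa using card_nsmul_le_sum (T \ S) q 1 fun i hi => hTq i (mem_sdiff.1 hi).1
  have hcard := card_sdiff_add_card_inter T S
  rw [inter_comm, hT] at hcard
  omega

lemma sum_add_le_of_card_lt (hΛ : Antitone Λ)
    (hq : ∀ S : Finset ι, ∑ i ∈ S, q i ≤ ∑ n ∈ range #S, Λ n)
    (hzero : ∀ n, K ≤ n → Λ n = 0) (hT : #T = K) {c : ℤ} (hc : 1 ≤ c)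
    (hin : ∀ i ∈ T, c ≤ q i) (hout : ∀ i ∉ T, q i ≤ c) (hS : #S < K) :
    ∑ i ∈ S, q i + #S ≤ ∑ n ∈ range #S, Λ n + #(S ∩ T) := by
  have hST := card_sdiff_add_card_inter S T
  have hTS := card_sdiff_add_card_inter T S
  rw [inter_comm, hT] at hTS
  have hSout : ∑ i ∈ S \ T, q i ≤ #(S \ T) * c := by
    simpa using sum_le_card_nsmul (S \ T) q c fun i hi => hout i (mem_sdiff.1 hi).2
  have hTin : #(T \ S) * c ≤ ∑ i ∈ T \ S, q i := by
    simpa using card_nsmul_le_sum (T \ S) q c fun i hi => hin i (mem_sdiff.1 hi).1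
  have hdc : (#(S \ T) : ℤ) ≤ #(S \ T) * c := by nlinarith
  rcases le_or_gt (c + 1) (Λ (#S - 1)) with hbig | hsmall
  · have hinter := hq (S ∩ T)
    have hsplit := sum_inter_add_sum_sdiff S T q
    have hwindow : #(Ico #(S ∩ T) #S) * (c + 1) ≤ ∑ n ∈ Ico #(S ∩ T) #S, Λ n := by
      simpa using card_nsmul_le_sum _ Λ (c + 1) fun n hn =>
        hbig.trans (hΛ (Nat.le_sub_one_of_lt (mem_Ico.1 hn).2))
    have hcard : ((#S - #(S ∩ T) : ℕ) : ℤ) = #(S \ T) := by omega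
    rw [Nat.card_Ico, hcard] at hwindow
    rw [← sum_range_add_sum_Ico Λ (card_le_card inter_subset_left)]
    nlinarith
  · have hunion := hq (S ∪ T \ S)
    have hKunion : K ≤ #(S ∪ T \ S) := by
      rw [union_sdiff_self_eq_union]
      exact hT ▸ card_le_card subset_union_right
    rw [sum_union disjoint_sdiff, sum_range_eq_sum_range_of_le hzero hKunion,
      ← sum_range_add_sum_Ico Λ hS.le] at hunion
    have hwindow : ∑ n ∈ Ico #S K, Λ n ≤ #(Ico #S K) * c := by
      simpa using sum_le_card_nsmul _ Λ c fun n hn =>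
        (hΛ (Nat.sub_le _ 1 |>.trans (mem_Ico.1 hn).1)).trans (by omega)
    rw [Nat.card_Ico] at hwindow
    have hcard : (#(T \ S) : ℤ) * c = ((K - #S : ℕ) : ℤ) * c + #(S \ T) * c := by
      rw [← add_mul]; congr 1; omega
    nlinarith

variable [Fintype ι]

lemma IsMajorizedBy.exists_top_entries (hpos : ∀ n < K, 1 ≤ Λ n)
    (hzero : ∀ n, K ≤ n → Λ n = 0) (hK : K ≤ Fintype.card ι) (hq : IsMajorizedBy q Λ) :
    ∃ T : Finset ι, #T = K ∧ (∀ u ∈ T, 1 ≤ q u) ∧ ∀ u ∈ T, ∀ w ∉ T, q w ≤ q u := by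
  obtain ⟨T, hTK, hTmax⟩ := exists_max_image (powersetCard K univ) (fun U => ∑ i ∈ U, q i)
    (powersetCard_nonempty.2 (by simpa using hK))
  replace hTK : #T = K := (mem_powersetCard.1 hTK).2
  have hswap : ∀ u ∈ T, ∀ w ∉ T, q w ≤ q u := by
    intro u hu w hw
    have hwu : w ∉ T.erase u := fun h => hw (mem_of_mem_erase h)
    have hK0 := card_pos.2 ⟨u, hu⟩
    have := hTmax (insert w (T.erase u)) <| mem_powersetCard.2 ⟨subset_univ _, by
      rw [card_insert_of_notMem hwu, card_erase_of_mem hu]; omega⟩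
    rw [sum_insert hwu, ← add_sum_erase T q hu] at this
    linarith
  refine ⟨T, hTK, fun u hu => ?_, hswap⟩
  by_contra! hu0
  have hK0 := card_pos.2 ⟨u, hu⟩
  have hcompl : ∑ i ∈ Tᶜ, q i ≤ 0 :=
    sum_nonpos fun w hw => (hswap u hu w (mem_compl.1 hw)).trans (by omega)
  have herase := hq.sum_le (T.erase u)
  rw [card_erase_of_mem hu, hTK] at herase
  have htotal := hq.sum_eq
  rw [← sum_add_sum_compl T, ← add_sum_erase T q hu,
    sum_range_eq_sum_range_of_le hzero (hTK ▸ card_le_univ T),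
    show K = K - 1 + 1 by omega, sum_range_succ] at htotal
  have := hpos (K - 1) (by omega)
  omega

lemma IsMajorizedBy.exists_sub_indicator (hΛ : Antitone Λ) (hpos : ∀ n < K, 1 ≤ Λ n)
    (hzero : ∀ n, K ≤ n → Λ n = 0) (hK : K ≤ Fintype.card ι) (hq : IsMajorizedBy q Λ) :
    ∃ T : Finset ι, #T = K ∧
      IsMajorizedBy (q - fun i => if i ∈ T then 1 else 0) fun n => max (Λ n - 1) 0 := by
  obtain ⟨T, hTK, hone, hswap⟩ := hq.exists_top_entries hpos hzero hK
  refine ⟨T, hTK, fun S => ?_, ?_⟩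
  · have hsplit := sum_range_eq_sum_range_max_sub_one_add_min hpos hzero #S
    simp only [Pi.sub_apply, sum_sub_distrib, sum_indicator_eq_card_inter]
    by_cases hS : K ≤ #S
    · have := sum_add_le_of_le_card hq.sum_le hzero hTK hone hS
      rw [min_eq_right hS] at hsplit
      omega
    · obtain ⟨u, hu, hmin⟩ := exists_min_image T q (card_pos.1 (by omega))
      have := sum_add_le_of_card_lt hΛ hq.sum_le hzero hTK (hone u hu) hmin (hswap u hu)
        (not_le.1 hS)
      rw [min_eq_left (by omega)] at hsplit
      omega
  · have hsplit := sum_range_eq_sum_range_max_sub_one_add_min hpos hzero (Fintype.card ι)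
    rw [min_eq_right hK] at hsplit
    simp only [Pi.sub_apply, sum_sub_distrib, sum_indicator_eq_card_inter, univ_inter, hTK,
      hq.sum_eq]
    omega

lemma IsMajorizedBy.add_indicator (hpos : ∀ n < K, 1 ≤ Λ n) (hzero : ∀ n, K ≤ n → Λ n = 0)
    (hK : K ≤ Fintype.card ι) {w : ι → ℤ} (hw : IsMajorizedBy w fun n => max (Λ n - 1) 0)
    (hT : #T = K) : IsMajorizedBy (w + fun i => if i ∈ T then 1 else 0) Λ where
  sum_le S := by
    have hinter : #(S ∩ T) ≤ min #S K :=
      le_min (card_le_card inter_subset_left) (hT ▸ card_le_card inter_subset_right)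
    simp only [Pi.add_apply, sum_add_distrib, sum_indicator_eq_card_inter,
      sum_range_eq_sum_range_max_sub_one_add_min hpos hzero #S]
    have := hw.sum_le S
    omega
  sum_eq := by
    simp only [Pi.add_apply, sum_add_distrib, sum_indicator_eq_card_inter, univ_inter, hT,
      hw.sum_eq, sum_range_eq_sum_range_max_sub_one_add_min hpos hzero, min_eq_right hK]

lemma IsMajorizedBy.exists_sub_sum_indicator (r : ℕ) (hΛ : Antitone Λ)
    (hpos : ∀ n < K, (r : ℤ) ≤ Λ n) (hzero : ∀ n, K ≤ n → Λ n = 0) (hK : K ≤ Fintype.card ι)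
    (hq : IsMajorizedBy q Λ) :
    ∃ T : Fin r → Finset ι, (∀ a, #(T a) = K) ∧
      IsMajorizedBy (q - ∑ a, fun i => if i ∈ T a then 1 else 0) fun n => max (Λ n - r) 0 := by
  induction r with
  | zero =>
    have hΛ0 : (fun n => max (Λ n) 0) = Λ := funext fun n => by
      by_cases hn : n < K
      · have := hpos n hn; push_cast at this; omega
      · simp [hzero n (not_lt.1 hn)]
    exact ⟨Fin.elim0, fun a => a.elim0, by simpa [hΛ0] using hq⟩
  | succ r ih =>
    obtain ⟨T, hT, hqT⟩ := ih fun n hn => by have := hpos n hn; push_cast at this; omega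
    obtain ⟨T', hT', hqT'⟩ := hqT.exists_sub_indicator
      (fun a b hab => max_le_max (by linarith [hΛ hab]) le_rfl)
      (fun n hn => by have := hpos n hn; push_cast at this; omega)
      (fun n hn => by simp [hzero n hn]) hK
    refine ⟨Fin.cons T' T, Fin.cases hT' hT, ?_⟩
    convert hqT' using 1
    · rw [Fin.sum_univ_succ]
      simp only [Fin.cons_zero, Fin.cons_succ]
      abel
    · funext n
      push_cast
      omega

end Peeling

lemma exists_forall_lt_one_le_and_forall_ge_eq_zero {Λ : ℕ → ℤ} (hΛ : Antitone Λ)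
    (h0 : ∀ n, 0 ≤ Λ n) {m : ℕ} (hm : ∀ n, m ≤ n → Λ n = 0) :
    ∃ K ≤ m, (∀ n < K, 1 ≤ Λ n) ∧ ∀ n, K ≤ n → Λ n = 0 := by
  classical
  have hex : ∃ K, Λ K = 0 := ⟨m, hm m le_rfl⟩
  refine ⟨Nat.find hex, Nat.find_min' hex (hm m le_rfl), fun n hn => ?_, fun n hn => ?_⟩
  · have := Nat.find_min hex hn; have := h0 n; omega
  · have := hΛ hn; have := Nat.find_spec hex; have := h0 n; omega

theorem exists_sum_eq_of_isMajorizedBy_mul {ι : Type*} [Fintype ι] [DecidableEq ι] (t : ℕ)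
    {Λ : ℕ → ℤ} (hΛ : Antitone Λ) (h0 : ∀ n, 0 ≤ Λ n)
    (hsupp : ∀ n, Fintype.card ι ≤ n → Λ n = 0) {p : ι → ℤ}
    (hp : IsMajorizedBy p fun n => t * Λ n) :
    ∃ v : Fin t → ι → ℤ, (∀ a, IsMajorizedBy (v a) Λ) ∧ ∑ a, v a = p := by
  induction hN : (Λ 0).toNat generalizing Λ p with
  | zero =>
    have hΛ0 : ∀ n, Λ n = 0 := fun n => le_antisymm ((hΛ n.zero_le).trans (by omega)) (h0 n)
    have hp0 : p = 0 := by
      have hle : ∀ i ∈ univ, p i ≤ 0 := fun i _ => by simpa [hΛ0] using hp.sum_le {i}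
      funext i
      exact (sum_eq_zero_iff_of_nonpos hle).1 (by simpa [hΛ0] using hp.sum_eq) i (mem_univ i)
    exact ⟨0, fun a => ⟨fun S => by simp [hΛ0], by simp [hΛ0]⟩, by simp [hp0]⟩
  | succ N ih =>
    obtain ⟨K, hK, hpos, hzero⟩ := exists_forall_lt_one_le_and_forall_ge_eq_zero hΛ h0 hsupp
    obtain ⟨T, hT, hpT⟩ := hp.exists_sub_sum_indicator t
      (fun a b hab => mul_le_mul_of_nonneg_left (hΛ hab) t.cast_nonneg)
      (fun n hn => le_mul_of_one_le_right t.cast_nonneg (hpos n hn))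
      (fun n hn => by simp [hzero n hn]) hK
    have hscale : (fun n => max ((t : ℤ) * Λ n - t) 0) = fun n => t * max (Λ n - 1) 0 := by
      funext n
      rw [mul_max_of_nonneg _ _ t.cast_nonneg, mul_sub, mul_one, mul_zero]
    rw [hscale] at hpT
    obtain ⟨w, hw, hsum⟩ := ih (fun a b hab => max_le_max (by linarith [hΛ hab]) le_rfl)
      (fun n => le_max_right _ _) (fun n hn => by simp [hsupp n hn]) hpT (by omega)
    refine ⟨fun a => w a + fun i => if i ∈ T a then 1 else 0,
      fun a => (hw a).add_indicator hpos hzero hK (hT a), ?_⟩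
    rw [sum_add_distrib, hsum, sub_add_cancel]

section Permutohedron

variable {m : ℕ} (lam : Fin m → ℕ)

def paddedParts : ℕ → ℤ := fun n => if h : n < m then lam ⟨n, h⟩ else 0

variable {lam}

@[simp] lemma paddedParts_val (i : Fin m) : paddedParts lam i = lam i := by
  simp [paddedParts]

lemma paddedParts_nonneg (n : ℕ) : 0 ≤ paddedParts lam n := by
  unfold paddedParts
  split_ifs <;> simp

lemma paddedParts_of_le {n : ℕ} (hn : m ≤ n) : paddedParts lam n = 0 := by
  simp [paddedParts, not_lt.2 hn]

lemma paddedParts_antitone (hlam : Antitone lam) : Antitone (paddedParts lam) := by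
  intro a b hab
  by_cases hb : b < m
  · simpa [paddedParts, hb, hab.trans_lt hb] using
      hlam (show (⟨a, hab.trans_lt hb⟩ : Fin m) ≤ ⟨b, hb⟩ from hab)
  · simpa [paddedParts_of_le (not_lt.1 hb)] using paddedParts_nonneg a

lemma antitone_intCast_paddedParts (hlam : Antitone lam) :
    Antitone fun n => (paddedParts lam n : ℝ) :=
  fun _ _ hab => Int.cast_le.2 (paddedParts_antitone hlam hab)

lemma permPoly_eq_convexHull_permSet :
    permPoly m lam = convexHull ℝ (permSet fun i : Fin m => (paddedParts lam i : ℝ)) := by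
  unfold permPoly permSet
  congr 1
  ext x
  simp [Function.comp_def, eq_comm]

lemma intCast_mem_permPoly_iff (hlam : Antitone lam) (x : Fin m → ℤ) :
    (fun i => (x i : ℝ)) ∈ permPoly m lam ↔ IsMajorizedBy x (paddedParts lam) := by
  rw [permPoly_eq_convexHull_permSet, ← IsMajorizedBy.intCast_iff (R := ℝ)]
  exact ⟨isMajorizedBy_of_mem_convexHull_permSet (antitone_intCast_paddedParts hlam),
    mem_convexHull_permSet_of_isMajorizedBy⟩

lemma isMajorizedBy_of_mem_smul_permPoly (hlam : Antitone lam) {t : ℕ} {p : Fin m → ℤ}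
    (hp : (fun i => (p i : ℝ)) ∈ (t : ℝ) • permPoly m lam) :
    IsMajorizedBy p fun n => t * paddedParts lam n := by
  obtain ⟨z, hz, hpz⟩ := Set.mem_smul_set.1 hp
  rw [permPoly_eq_convexHull_permSet] at hz
  have := (isMajorizedBy_of_mem_convexHull_permSet (antitone_intCast_paddedParts hlam) hz).smul
    (t.cast_nonneg : (0 : ℝ) ≤ t)
  rw [hpz] at this
  rw [← IsMajorizedBy.intCast_iff (R := ℝ)]
  convert this using 1
  funext n
  simp

end Permutohedron

theorem permutohedron_IDP_general (m : ℕ) (lam : Fin m → ℕ) (hlam : Antitone lam)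
    (t : ℕ) (p : Fin m → ℤ)
    (hp : (fun i => (p i : ℝ)) ∈ (t : ℝ) • permPoly m lam) :
    ∃ v : Fin t → Fin m → ℤ,
      (∀ a : Fin t, (fun i => (v a i : ℝ)) ∈ permPoly m lam) ∧ p = ∑ a, v a := by
  obtain ⟨v, hv, hsum⟩ := exists_sum_eq_of_isMajorizedBy_mul t (paddedParts_antitone hlam)
    paddedParts_nonneg (fun n hn => paddedParts_of_le (by simpa using hn))
    (isMajorizedBy_of_mem_smul_permPoly hlam hp)
  exact ⟨v, fun a => (intCast_mem_permPoly_iff hlam (v a)).2 (hv a), hsum.symm⟩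

/-- The `λ`-permutohedron has the integer decomposition property: for every positive
integer `t`, every lattice point of `t • P_λ^m` is a sum of `t` lattice points of `P_λ^m`. -/
theorem permutohedron_IDP (m : ℕ) (lam : Fin m → ℕ) (hlam : Antitone lam)
    (t : ℕ) (ht : 1 ≤ t) (p : Fin m → ℤ)
    (hp : (fun i => (p i : ℝ)) ∈ (t : ℝ) • permPoly m lam) :
    ∃ v : Fin t → Fin m → ℤ,
      (∀ a : Fin t, (fun i => (v a i : ℝ)) ∈ permPoly m lam) ∧ p = ∑ a, v a :=
  permutohedron_IDP_general m lam hlam t p hp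
end

section
/- In the sequence of dominating partitions for the inflated symmetric Grothendieck polynomial G_{h,λ}, the partition λ^{(k)} dominates every partition μ ∈ A(h,λ) with μ ⊢ |λ|+k. -/
/-- `mu` is a partition with at most `m` parts (weakly decreasing entries). -/
def IsPartition (m : ℕ) (mu : Fin m → ℕ) : Prop := ∀ i j : Fin m, i ≤ j → mu j ≤ mu i

/-- A filling of the skew shape `μ/λ` that increases strictly along each row and each
column, with entries in row `r` (0-indexed) taken from `{1, ..., h·r}` (i.e. row `r+1`
in 1-indexed terms gets entries from `{1, ..., h(r+1-1)}`). These are the fillings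
counted by `b_{h,λμ}`. -/
structure SkewFilling (m h : ℕ) (lam mu : Fin m → ℕ) where
  entry : Fin m → ℕ → ℕ
  one_le : ∀ i j, lam i ≤ j → j < mu i → 1 ≤ entry i j
  upper : ∀ i j, lam i ≤ j → j < mu i → entry i j ≤ h * i.1
  row_strict : ∀ i j k, lam i ≤ j → j < k → k < mu i → entry i j < entry i k
  col_strict : ∀ i k : Fin m, ∀ j, i < k → lam i ≤ j → j < mu i → lam k ≤ j → j < mu k →
    entry i j < entry k j

/-- `μ ∈ A(h,λ)`: `μ` is a partition containing `λ` with `b_{h,λμ} ≠ 0`,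
i.e. admitting at least one valid skew filling of `μ/λ`. -/
def AMem (m h : ℕ) (lam mu : Fin m → ℕ) : Prop :=
  IsPartition m mu ∧ (∀ i, lam i ≤ mu i) ∧ Nonempty (SkewFilling m h lam mu)

/-- A box may be added to row `r` of `nu` (relative to base partition `lam`):
fewer than `h·r` boxes have been added to row `r` so far, and the result is
still a partition. -/
def Addable (m h : ℕ) (lam nu : Fin m → ℕ) (r : Fin m) : Prop :=
  nu r - lam r < h * r.1 ∧ ∀ q : Fin m, q.1 + 1 = r.1 → nu r < nu q

open scoped Classical in
/-- One step in the construction of the sequence of dominating partitions: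
add a box in the smallest addable row (if any). -/
noncomputable def domStep (m h : ℕ) (lam nu : Fin m → ℕ) : Fin m → ℕ :=
  if hne : (Finset.univ.filter (Addable m h lam nu)).Nonempty then
    Function.update nu ((Finset.univ.filter (Addable m h lam nu)).min' hne)
      (nu ((Finset.univ.filter (Addable m h lam nu)).min' hne) + 1)
  else nu

/-- The sequence of dominating partitions `λ^{(0)} = λ, λ^{(1)}, λ^{(2)}, ...`
for the inflated symmetric Grothendieck polynomial `G_{h,λ}`. -/
noncomputable def domSeq (m h : ℕ) (lam : Fin m → ℕ) : ℕ → Fin m → ℕ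
  | 0 => lam
  | k + 1 => domStep m h lam (domSeq m h lam k)

/-- Dominance order: `a` dominates `b` if all partial sums of `a` are at least
those of `b`. -/
def Dominates (m : ℕ) (a b : Fin m → ℕ) : Prop :=
  ∀ r : Fin m, ∑ i ∈ Finset.univ.filter (fun i => i ≤ r), b i ≤
    ∑ i ∈ Finset.univ.filter (fun i => i ≤ r), a i

/-- The row bound `f i = min_{j ≤ i} (λ j + h·j)`. -/
noncomputable def fBd (m h : ℕ) (lam : Fin m → ℕ) (i : Fin m) : ℕ :=
  (Finset.Iic i).inf' ⟨i, Finset.mem_Iic.2 le_rfl⟩ (fun j => lam j + h * j.1)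

lemma fBd_le (m h : ℕ) (lam : Fin m → ℕ) {i j : Fin m} (hj : j ≤ i) :
    fBd m h lam i ≤ lam j + h * j.1 :=
  Finset.inf'_le _ (Finset.mem_Iic.2 hj)

lemma fBd_anti (m h : ℕ) (lam : Fin m → ℕ) {i j : Fin m} (hj : j ≤ i) :
    fBd m h lam i ≤ fBd m h lam j := by
  obtain ⟨q, hq, hq2⟩ := Finset.exists_mem_eq_inf'
    (⟨j, Finset.mem_Iic.2 le_rfl⟩ : (Finset.Iic j).Nonempty) (fun j => lam j + h * j.1)
  have hq2' : fBd m h lam j = lam q + h * q.1 := hq2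
  rw [hq2']
  exact fBd_le m h lam (le_trans (Finset.mem_Iic.1 hq) hj)

lemma lam_le_fBd (m h : ℕ) (lam : Fin m → ℕ) (hlam : IsPartition m lam) (i : Fin m) :
    lam i ≤ fBd m h lam i :=
  Finset.le_inf' _ _ (fun j hj => le_trans (hlam j i (Finset.mem_Iic.1 hj)) (Nat.le_add_right _ _))

/-- If no row `≤ r` is addable, then every row `≤ r` is full (equals `fBd`). -/
lemma full_of_not_addable (m h : ℕ) (lam nu : Fin m → ℕ)
    (h1 : ∀ i, lam i ≤ nu i) (h2 : ∀ i, nu i ≤ fBd m h lam i)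
    (hadj : ∀ i j : Fin m, i.1 + 1 = j.1 → nu j ≤ nu i)
    {r : Fin m} (hna : ∀ i, i ≤ r → ¬ Addable m h lam nu i) :
    ∀ i, i ≤ r → nu i = fBd m h lam i := by
  have main : ∀ n : ℕ, ∀ i : Fin m, i.1 = n → i ≤ r → nu i = fBd m h lam i := by
    intro n
    induction n using Nat.strong_induction_on with
    | _ n IH =>
      intro i hi hir
      have hni := hna i hir
      rw [Addable, not_and_or] at hni
      rcases hni with hA | hB
      · have hA' : h * i.1 ≤ nu i - lam i := Nat.le_of_not_lt hA
        have h3 : lam i + h * i.1 ≤ nu i := by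
          have := h1 i; omega
        exact le_antisymm (h2 i) (le_trans (fBd_le m h lam le_rfl) h3)
      · push_neg at hB
        obtain ⟨q, hq1, hq2⟩ := hB
        have hqi : q < i := by
          rw [Fin.lt_def]; omega
        have hqr : q ≤ r := le_trans (le_of_lt hqi) hir
        have hq3 : nu q = fBd m h lam q := IH q.1 (by omega) q rfl hqr
        have h4 : nu i ≤ nu q := hadj q i hq1
        refine le_antisymm (h2 i) ?_
        calc fBd m h lam i ≤ fBd m h lam q := fBd_anti m h lam (le_of_lt hqi)
          _ = nu q := hq3.symm
          _ ≤ nu i := hq2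
  exact fun i => main i.1 i rfl

lemma domSeq_inv (m h : ℕ) (lam : Fin m → ℕ) (hlam : IsPartition m lam) (k : ℕ) :
    (∀ i, lam i ≤ domSeq m h lam k i) ∧
    (∀ i, domSeq m h lam k i ≤ fBd m h lam i) ∧
    (∀ i j : Fin m, i.1 + 1 = j.1 → domSeq m h lam k j ≤ domSeq m h lam k i) ∧
    (∀ r : Fin m,
      min (∑ i ∈ Finset.univ.filter (fun i => i ≤ r), fBd m h lam i)
        ((∑ i ∈ Finset.univ.filter (fun i => i ≤ r), lam i) + k) ≤
      ∑ i ∈ Finset.univ.filter (fun i => i ≤ r), domSeq m h lam k i) := by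
  classical
  induction k with
  | zero =>
    refine ⟨fun i => le_rfl, fun i => lam_le_fBd m h lam hlam i,
      fun i j hij => hlam i j (by rw [Fin.le_def]; omega), fun r => ?_⟩
    have h0 : domSeq m h lam 0 = lam := rfl
    rw [h0]
    simpa using min_le_right _ _
  | succ k IH =>
    obtain ⟨hge, hle, hadj, hsum⟩ := IH
    set nu := domSeq m h lam k with hnu
    have hshow : domSeq m h lam (k+1) = domStep m h lam nu := rfl
    rw [hshow]
    rw [domStep]
    split_ifs with hne
    · set r0 := (Finset.univ.filter (Addable m h lam nu)).min' hne with hr0def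
      have hr0 : Addable m h lam nu r0 :=
        (Finset.mem_filter.1 (Finset.min'_mem _ hne)).2
      have hmin : ∀ i, Addable m h lam nu i → r0 ≤ i := fun i hi =>
        Finset.min'_le _ _ (Finset.mem_filter.2 ⟨Finset.mem_univ _, hi⟩)
      -- r0 is not row 0
      have hr0pos : 0 < r0.1 := by
        rcases Nat.eq_zero_or_pos r0.1 with h0 | h0
        · exfalso
          have := hr0.1
          rw [h0] at this
          omega
        · exact h0
      -- the predecessor row of r0
      have hr0m : r0.1 - 1 < m := by omega
      set q0 : Fin m := ⟨r0.1 - 1, hr0m⟩ with hq0def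
      have hq0 : q0.1 + 1 = r0.1 := by simp [hq0def]; omega
      have hlt : nu r0 < nu q0 := hr0.2 q0 hq0
      -- new value fits under fBd
      have hnewle : nu r0 + 1 ≤ fBd m h lam r0 := by
        apply Finset.le_inf'
        intro j hj
        rcases eq_or_lt_of_le (Finset.mem_Iic.1 hj) with hj1 | hj1
        · have := hr0.1
          have := hge r0
          rw [hj1]; omega
        · have hjq : j ≤ q0 := by
            rw [Fin.le_def]; simp [hq0def]
            have := hj1; rw [Fin.lt_def] at this; omega
          calc nu r0 + 1 ≤ nu q0 := hlt
            _ ≤ fBd m h lam q0 := hle q0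
            _ ≤ lam j + h * j.1 := fBd_le m h lam hjq
      refine ⟨?_, ?_, ?_, ?_⟩
      · intro i
        rcases eq_or_ne i r0 with heq | hi
        · rw [heq, Function.update_self]; exact le_trans (hge r0) (Nat.le_succ _)
        · rw [Function.update_of_ne hi]; exact hge i
      · intro i
        rcases eq_or_ne i r0 with heq | hi
        · rw [heq, Function.update_self]; exact hnewle
        · rw [Function.update_of_ne hi]; exact hle i
      · intro i j hij
        rcases eq_or_ne j r0 with heq | hj
        · have hir : i ≠ r0 := by intro hc; rw [hc, ← heq] at hij; omega
          rw [heq, Function.update_self, Function.update_of_ne hir]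
          have : q0.1 + 1 = r0.1 := hq0
          exact hr0.2 i (by rw [← heq]; exact hij)
        · rw [Function.update_of_ne hj]
          rcases eq_or_ne i r0 with heq | hi
          · rw [heq, Function.update_self]
            have hthis := hadj i j hij
            rw [heq] at hthis
            exact le_trans hthis (Nat.le_succ _)
          · rw [Function.update_of_ne hi]
            exact hadj i j hij
      · intro r
        by_cases hcase : r0 ≤ r
        · have hmem : r0 ∈ Finset.univ.filter (fun i => i ≤ r) :=
            Finset.mem_filter.2 ⟨Finset.mem_univ _, hcase⟩
          rw [Finset.sum_update_of_mem hmem]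
          have hsplit := Finset.sum_eq_sum_sdiff_singleton_add hmem nu
          have hIH := hsum r
          omega
        · have hna : ∀ i, i ≤ r → ¬ Addable m h lam nu i := by
            intro i hir hAi
            exact hcase (le_trans (hmin i hAi) hir)
          have hfull := full_of_not_addable m h lam nu hge hle hadj hna
          have hnotmem : r0 ∉ Finset.univ.filter (fun i => i ≤ r) := by
            simp [hcase]
          rw [Finset.sum_update_of_notMem hnotmem]
          have heq : ∑ i ∈ Finset.univ.filter (fun i => i ≤ r), nu i =
              ∑ i ∈ Finset.univ.filter (fun i => i ≤ r), fBd m h lam i := by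
            apply Finset.sum_congr rfl
            intro i hi
            exact hfull i (Finset.mem_filter.1 hi).2
          rw [heq]
          exact min_le_left _ _
    · have hna : ∀ i : Fin m, ¬ Addable m h lam nu i := by
        intro i hAi
        exact hne ⟨i, Finset.mem_filter.2 ⟨Finset.mem_univ _, hAi⟩⟩
      refine ⟨hge, hle, hadj, ?_⟩
      intro r
      have hfull := full_of_not_addable m h lam nu hge hle hadj (fun i _ => hna i) (r := r)
      have heq : ∑ i ∈ Finset.univ.filter (fun i => i ≤ r), nu i =
          ∑ i ∈ Finset.univ.filter (fun i => i ≤ r), fBd m h lam i := by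
        apply Finset.sum_congr rfl
        intro i hi
        exact hfull i (Finset.mem_filter.1 hi).2
      rw [heq]
      exact min_le_left _ _

/-- In the sequence of dominating partitions for `G_{h,λ}`, the partition `λ^{(k)}`
dominates every partition `μ ∈ A(h,λ)` with `|μ| = |λ| + k`. -/
theorem domSeq_dominates (m h : ℕ) (hh : 1 ≤ h) (lam : Fin m → ℕ)
    (hlam : IsPartition m lam) (k : ℕ) (mu : Fin m → ℕ)
    (hmu : AMem m h lam mu) (hsize : ∑ i, mu i = (∑ i, lam i) + k) :
    Dominates m (domSeq m h lam k) mu := by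
  classical
  obtain ⟨hmuP, hsub, ⟨F⟩⟩ := hmu
  -- entries grow at least by one along a row
  have key : ∀ (i : Fin m) (d : ℕ), lam i + d < mu i → d + 1 ≤ F.entry i (lam i + d) := by
    intro i d
    induction d with
    | zero => intro hd; simpa using F.one_le i (lam i) le_rfl (by simpa using hd)
    | succ d IH =>
      intro hd
      have h1 : lam i + d < mu i := by omega
      have h2 := IH h1
      have h3 := F.row_strict i (lam i + d) (lam i + d + 1) (Nat.le_add_right _ _)
        (by omega) (by omega)
      have : lam i + (d + 1) = lam i + d + 1 := by omega
      rw [this]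
      omega
  -- the per-row bound
  have hrow : ∀ i : Fin m, mu i ≤ lam i + h * i.1 := by
    intro i
    by_cases hc : lam i < mu i
    · have hd : lam i + (mu i - lam i - 1) < mu i := by omega
      have h1 := key i (mu i - lam i - 1) hd
      have h2 := F.upper i (lam i + (mu i - lam i - 1)) (Nat.le_add_right _ _) hd
      omega
    · omega
  have hmuf : ∀ i, mu i ≤ fBd m h lam i := by
    intro i
    apply Finset.le_inf'
    intro j hj
    exact le_trans (hmuP j i (Finset.mem_Iic.1 hj)) (hrow j)
  obtain ⟨hge, hle, hadj, hsum⟩ := domSeq_inv m h lam hlam k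
  intro r
  refine le_trans ?_ (hsum r)
  apply le_min
  · exact Finset.sum_le_sum (fun i _ => hmuf i)
  · -- partial sum of mu is at most partial sum of lam plus k
    have hdiff : ∑ i ∈ Finset.univ.filter (fun i => i ≤ r), (mu i - lam i) ≤ k := by
      have h1 : ∑ i ∈ Finset.univ.filter (fun i => i ≤ r), (mu i - lam i) ≤
          ∑ i : Fin m, (mu i - lam i) :=
        Finset.sum_le_sum_of_subset (Finset.filter_subset _ _)
      have h2 : ∑ i : Fin m, (mu i - lam i) = k := by
        have h3 : ∀ i : Fin m, mu i = lam i + (mu i - lam i) := fun i => by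
          have := hsub i; omega
        have h4 : ∑ i : Fin m, mu i =
            (∑ i : Fin m, lam i) + ∑ i : Fin m, (mu i - lam i) := by
          rw [← Finset.sum_add_distrib]
          exact Finset.sum_congr rfl (fun i _ => h3 i)
        omega
      omega
    have h5 : ∑ i ∈ Finset.univ.filter (fun i => i ≤ r), mu i =
        (∑ i ∈ Finset.univ.filter (fun i => i ≤ r), lam i) +
        ∑ i ∈ Finset.univ.filter (fun i => i ≤ r), (mu i - lam i) := by
      rw [← Finset.sum_add_distrib]
      exact Finset.sum_congr rfl (fun i _ => by have := hsub i; omega)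
    omega
end

section
/- A(h,λ) consists exactly of the partitions μ with λ ⊆ μ ⊆ λ^{(N)}, where |λ|+N = deg G_{h,λ} and λ^{(N)} is the last partition in the sequence of dominating partitions; in particular λ^{(N)} is the unique element of A(h,λ) of size |λ|+N. -/
/-- If every row satisfies the bound `μ_i ≤ λ_i + h·i`, the "top-justified" filling
(`entry i j = h·i + 1 + j - μ_i`) is a valid skew filling. -/
lemma filling_of_bound (m h : ℕ) (hh : 1 ≤ h) (lam mu : Fin m → ℕ) (hmu : IsPartition m mu)
    (hb : ∀ i : Fin m, mu i ≤ lam i + h * i.1) :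
    Nonempty (SkewFilling m h lam mu) := by
  refine ⟨⟨fun i j => h * i.1 + 1 + j - mu i, ?_, ?_, ?_, ?_⟩⟩
  · intro i j h1 h2; have := hb i; omega
  · intro i j h1 h2; have := hb i; omega
  · intro i j k h1 h2 h3; have := hb i; omega
  · intro i k j hik h1 h2 h3 h4
    have hmki : mu k ≤ mu i := hmu i k (le_of_lt hik)
    have hik' : i.1 < k.1 := hik
    have hlt : h * i.1 < h * k.1 := by
      calc h * i.1 < h * i.1 + h := by omega
        _ = h * (i.1 + 1) := by ring
        _ ≤ h * k.1 := Nat.mul_le_mul_left h hik'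
    have := hb i; have := hb k; omega

/-- Conversely, a valid skew filling forces `μ_i ≤ λ_i + h·i` in every row. -/
lemma bound_of_filling (m h : ℕ) (lam mu : Fin m → ℕ) (F : SkewFilling m h lam mu) :
    ∀ i : Fin m, mu i ≤ lam i + h * i.1 := by
  intro i
  by_cases hne : lam i < mu i
  · have key : ∀ d, lam i + d < mu i → 1 + d ≤ F.entry i (lam i + d) := by
      intro d
      induction d with
      | zero => intro hd; simpa using F.one_le i (lam i) le_rfl (by omega)
      | succ n ih =>
        intro hd
        have h1 := ih (by omega)
        have h2 := F.row_strict i (lam i + n) (lam i + n + 1) (by omega) (by omega) (by omega)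
        have h3 : lam i + (n + 1) = lam i + n + 1 := by omega
        rw [h3]
        omega
    have h1 := key (mu i - 1 - lam i) (by omega)
    have h2 := F.upper i (lam i + (mu i - 1 - lam i)) (by omega) (by omega)
    omega
  · omega

/-- The invariant of the dominating sequence: each `λ^{(k)}` is a partition
containing `λ` with at most `h·r` boxes added in row `r`. -/
lemma domSeq_invariant (m h : ℕ) (lam : Fin m → ℕ) (hlam : IsPartition m lam) (k : ℕ) :
    IsPartition m (domSeq m h lam k) ∧ (∀ i, lam i ≤ domSeq m h lam k i) ∧
    (∀ i : Fin m, domSeq m h lam k i ≤ lam i + h * i.1) := by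
  classical
  induction k with
  | zero => exact ⟨hlam, fun i => le_rfl, fun i => Nat.le_add_right _ _⟩
  | succ n ih =>
    obtain ⟨hpart, hle, hbd⟩ := ih
    set nu := domSeq m h lam n with hnu
    show IsPartition m (domStep m h lam nu) ∧ (∀ i, lam i ≤ domStep m h lam nu i) ∧
      (∀ i : Fin m, domStep m h lam nu i ≤ lam i + h * i.1)
    unfold domStep
    split
    case isFalse => exact ⟨hpart, hle, hbd⟩
    case isTrue hne =>
      set r := (Finset.univ.filter (Addable m h lam nu)).min' hne with hr
      have hrmem : r ∈ Finset.univ.filter (Addable m h lam nu) := Finset.min'_mem _ hne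
      have hradd : Addable m h lam nu r := (Finset.mem_filter.mp hrmem).2
      have hupd : ∀ x : Fin m, Function.update nu r (nu r + 1) x =
          if x = r then nu r + 1 else nu x := by
        intro x; by_cases hx : x = r
        · subst hx; simp
        · rw [Function.update_of_ne hx, if_neg hx]
      refine ⟨?_, ?_, ?_⟩
      · intro i j hij
        rw [hupd, hupd]
        by_cases hjr : j = r
        · rw [if_pos hjr]
          by_cases hir : i = r
          · rw [if_pos hir]
          · rw [if_neg hir]
            have hijr : i.1 < r.1 := by
              have h1 : i.1 ≤ j.1 := hij
              have h2 : j.1 = r.1 := congrArg Fin.val hjr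
              have h3 : i.1 ≠ r.1 := fun hc => hir (Fin.ext hc)
              omega
            have hrm : r.1 - 1 < m := by omega
            have h1 : nu r < nu ⟨r.1 - 1, hrm⟩ :=
              hradd.2 ⟨r.1 - 1, hrm⟩ (by show r.1 - 1 + 1 = r.1; omega)
            have h2 : nu ⟨r.1 - 1, hrm⟩ ≤ nu i := hpart i ⟨r.1 - 1, hrm⟩ (by
              show i.1 ≤ r.1 - 1; omega)
            omega
        · rw [if_neg hjr]
          by_cases hir : i = r
          · rw [if_pos hir]
            have h1 : nu j ≤ nu i := hpart i j hij
            rw [hir] at h1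
            omega
          · rw [if_neg hir]; exact hpart i j hij
      · intro i
        rw [hupd]
        by_cases hir : i = r
        · rw [if_pos hir, hir]; have := hle r; omega
        · rw [if_neg hir]; exact hle i
      · intro i
        rw [hupd]
        by_cases hir : i = r
        · rw [if_pos hir, hir]
          have h1 := hradd.1
          have h2 := hle r
          omega
        · rw [if_neg hir]; exact hbd i

/-- If the dominating sequence stabilizes at `ν = λ^{(N)}`, then no row is addable:
each row is either saturated or equal in length to the previous row. -/
lemma stab_cases (m h : ℕ) (lam : Fin m → ℕ) (N : ℕ)
    (hstab : domSeq m h lam (N + 1) = domSeq m h lam N) :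
    ∀ r : Fin m, ¬ Addable m h lam (domSeq m h lam N) r := by
  classical
  set nu := domSeq m h lam N with hnu
  intro r hadd
  have hne : (Finset.univ.filter (Addable m h lam nu)).Nonempty :=
    ⟨r, Finset.mem_filter.mpr ⟨Finset.mem_univ r, hadd⟩⟩
  have hstep : domStep m h lam nu = nu := hstab
  unfold domStep at hstep
  rw [dif_pos hne] at hstep
  set s := (Finset.univ.filter (Addable m h lam nu)).min' hne
  have := congrFun hstep s
  simp at this

/-- `A(h,λ)` consists exactly of the partitions `μ` with `λ ⊆ μ ⊆ λ^{(N)}`, where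
`deg G_{h,λ} = |λ| + N` (expressed by: the dominating sequence stabilizes at step `N`
and `|λ^{(N)}| = |λ| + N`); in particular, `λ^{(N)}` is the unique element of
`A(h,λ)` of size `|λ| + N`. -/
theorem AMem_iff_between (m h : ℕ) (hh : 1 ≤ h) (lam : Fin m → ℕ) (hlam : IsPartition m lam)
    (N : ℕ) (hstab : domSeq m h lam (N + 1) = domSeq m h lam N)
    (hdeg : ∑ i, domSeq m h lam N i = (∑ i, lam i) + N) :
    (∀ mu : Fin m → ℕ, IsPartition m mu →
      (AMem m h lam mu ↔ ((∀ i, lam i ≤ mu i) ∧ ∀ i, mu i ≤ domSeq m h lam N i))) ∧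
    (∀ mu : Fin m → ℕ, AMem m h lam mu → ∑ i, mu i = (∑ i, lam i) + N →
      mu = domSeq m h lam N) := by
  obtain ⟨hnupart, hnule, hnubd⟩ := domSeq_invariant m h lam hlam N
  have hnadd := stab_cases m h lam N hstab
  set nu := domSeq m h lam N with hnu
  -- λ^{(N)} is the componentwise maximum among admissible μ
  have hmax : ∀ mu : Fin m → ℕ, IsPartition m mu → (∀ i, lam i ≤ mu i) →
      (∀ i : Fin m, mu i ≤ lam i + h * i.1) → ∀ i, mu i ≤ nu i := by
    intro mu hmupart hmule hmubd
    have key : ∀ n : ℕ, ∀ i : Fin m, i.1 ≤ n → mu i ≤ nu i := by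
      intro n
      induction n with
      | zero =>
        intro i hi
        have hni := hnadd i
        rw [Addable] at hni
        push_neg at hni
        by_cases hA : nu i - lam i < h * i.1
        · obtain ⟨q, hq1, _⟩ := hni hA
          omega
        · have := hmubd i; have := hnule i; omega
      | succ n ih =>
        intro i hi
        by_cases hin : i.1 ≤ n
        · exact ih i hin
        · have hni := hnadd i
          rw [Addable] at hni
          push_neg at hni
          by_cases hA : nu i - lam i < h * i.1
          · obtain ⟨q, hq1, hq2⟩ := hni hA
            have hqi : q ≤ i := by show q.1 ≤ i.1; omega
            have h1 : mu i ≤ mu q := hmupart q i hqi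
            have h2 : mu q ≤ nu q := ih q (by omega)
            omega
          · have := hmubd i; have := hnule i; omega
    intro i; exact key i.1 i le_rfl
  constructor
  · intro mu hmupart
    constructor
    · rintro ⟨_, hle, ⟨F⟩⟩
      exact ⟨hle, hmax mu hmupart hle (bound_of_filling m h lam mu F)⟩
    · rintro ⟨hle, hub⟩
      refine ⟨hmupart, hle, filling_of_bound m h hh lam mu hmupart ?_⟩
      intro i; exact le_trans (hub i) (hnubd i)
  · intro mu hA hsum
    obtain ⟨hmupart, hle, ⟨F⟩⟩ := hA
    have hub := hmax mu hmupart hle (bound_of_filling m h lam mu F)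
    have hs : ∑ i, mu i = ∑ i, nu i := by rw [hsum, hnu, hdeg]
    funext i
    exact (Finset.sum_eq_sum_iff_of_le (fun i _ => hub i)).mp hs i (Finset.mem_univ i)
end

section
/- For m ≥ 2 and λ = (m, m, ..., m, 0) ⊢ m(m−1) (with m−1 parts equal to m), the λ-permutohedron P_λ^m has a unique interior lattice point (m−1,...,m−1), and this point is lattice distance 1 from each facet; hence P_λ^m is reflexive. -/
/-- A (possibly lower-dimensional) lattice polytope `P` is reflexive with respect to the
lattice point `p` if: `p` lies in the relative (intrinsic) interior of `P`, it is the
unique lattice point there, and `p` is at lattice distance 1 from every facet of `P`,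
i.e. for every facet (an exposed face of dimension `dim P − 1`, exposed by a linear
functional `f`) there is no lattice point of the affine span of `P` whose `f`-value lies
strictly between `f p` and the value of `f` on the facet. -/
def ReflexivePolytope (m : ℕ) (P : Set (Fin m → ℝ)) (p : Fin m → ℤ) : Prop :=
  (fun i => (p i : ℝ)) ∈ intrinsicInterior ℝ P ∧
  (∀ q : Fin m → ℤ, (fun i => (q i : ℝ)) ∈ intrinsicInterior ℝ P → q = p) ∧
  ∀ (f : (Fin m → ℝ) →ₗ[ℝ] ℝ) (F : Set (Fin m → ℝ)), F.Nonempty →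
    F = {x ∈ P | ∀ y ∈ P, f y ≤ f x} →
    Module.finrank ℝ ↥(vectorSpan ℝ F) + 1 = Module.finrank ℝ ↥(vectorSpan ℝ P) →
    ∀ x ∈ F, ∀ z : Fin m → ℤ,
      (fun i => (z i : ℝ)) ∈ affineSpan ℝ P →
      ¬(f (fun i => (p i : ℝ)) < f (fun i => (z i : ℝ)) ∧
        f (fun i => (z i : ℝ)) < f x)

/-!
`P_λ^m` is the simplex with vertices `m • (𝟙 - e_j)`, i.e. `{x | ∑ x = m(m-1), x_i ≤ m}`, and
its affine span is the hyperplane `∑ x = m(m-1)`. Its relative interior is cut out by the strict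
inequalities `x_i < m`, which on lattice points of the hyperplane force `x = (m-1, …, m-1)`.
A functional exposing a facet is maximised on all vertices but one, `vertex m i`, so on the
hyperplane it is a nondecreasing affine function of `x_i` alone and the facet is `x_i = m`; a
lattice point strictly between the facet and `p` would need `m - 1 < z_i < m`.
-/

theorem LinearMap.apply_eq_sum_mul_apply_single {ι R : Type*} [Fintype ι] [DecidableEq ι]
    [CommSemiring R] (f : (ι → R) →ₗ[R] R) (u : ι → R) :
    f u = ∑ k, u k * f (Pi.single k 1) := by
  rw [f.pi_apply_eq_sum_univ]
  refine Finset.sum_congr rfl fun k _ => ?_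
  rw [smul_eq_mul]
  congr 2
  ext l
  simp [Pi.single_apply, eq_comm]

namespace PermutohedronMM0

open Finset Module

variable {m : ℕ}

def vertex (m : ℕ) (j : Fin m) : Fin m → ℝ := fun i => if i = j then 0 else m

def hRep (m : ℕ) : Set (Fin m → ℝ) := {x | ∑ i, x i = m * ((m : ℝ) - 1) ∧ ∀ i, x i ≤ m}

lemma sum_vertex (j : Fin m) : ∑ i, vertex m j i = m * ((m : ℝ) - 1) := by
  simp [vertex, sum_ite, filter_ne', Nat.cast_pred j.pos, mul_comm]

lemma vertex_mem_hRep (j : Fin m) : vertex m j ∈ hRep m :=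
  ⟨sum_vertex j, fun i => by unfold vertex; split_ifs <;> simp⟩

lemma convex_hRep : Convex ℝ (hRep m) := by
  intro x hx y hy a b ha hb hab
  refine ⟨?_, fun i => ?_⟩
  · simp only [Pi.add_apply, Pi.smul_apply, smul_eq_mul, sum_add_distrib, ← mul_sum, hx.1, hy.1]
    linear_combination (m * ((m : ℝ) - 1)) * hab
  · have hxi := mul_le_mul_of_nonneg_left (hx.2 i) ha
    have hyi := mul_le_mul_of_nonneg_left (hy.2 i) hb
    simp only [Pi.add_apply, Pi.smul_apply, smul_eq_mul]
    nlinarith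

lemma sum_barycentric (hm : 0 < m) {u : Fin m → ℝ} (hu : ∑ i, u i = m * ((m : ℝ) - 1)) :
    ∑ j, ((m : ℝ) - u j) / m = 1 := by
  rw [← sum_div, sum_sub_distrib, hu]
  simp only [sum_const, card_univ, Fintype.card_fin, nsmul_eq_mul]
  field_simp
  ring

lemma sum_barycentric_smul_vertex (hm : 0 < m) {u : Fin m → ℝ}
    (hu : ∑ i, u i = m * ((m : ℝ) - 1)) :
    ∑ j, (((m : ℝ) - u j) / m) • vertex m j = u := by
  have hm' : (m : ℝ) ≠ 0 := by positivity
  ext i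
  simp only [Finset.sum_apply, Pi.smul_apply, smul_eq_mul, vertex, mul_ite, mul_zero,
    div_mul_cancel₀ _ hm']
  rw [← sum_erase_add _ _ (mem_univ i), if_pos rfl, add_zero,
    sum_congr rfl fun j hj => if_neg (ne_of_mem_erase hj).symm,
    sum_erase_eq_sub (mem_univ i), sum_sub_distrib, hu]
  simp only [sum_const, card_univ, Fintype.card_fin, nsmul_eq_mul]
  ring

lemma convexHull_range_vertex (hm : 0 < m) : convexHull ℝ (Set.range (vertex m)) = hRep m := by
  refine (convexHull_min (Set.range_subset_iff.2 vertex_mem_hRep) convex_hRep).antisymm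
    fun x hx => ?_
  have hw := sum_barycentric hm hx.1
  have hx' := centerMass_mem_convexHull univ
    (fun j _ => div_nonneg (sub_nonneg.2 (hx.2 j)) (Nat.cast_nonneg m)) (by simp [hw])
    (fun j _ => Set.mem_range_self (f := vertex m) j)
  rwa [centerMass_eq_of_sum_1 _ _ hw, sum_barycentric_smul_vertex hm hx.1] at hx'

lemma vertex_comp_perm (j : Fin m) (σ : Equiv.Perm (Fin m)) :
    (fun i => vertex m j (σ i)) = vertex m (σ.symm j) := by
  ext i
  simp [vertex, Equiv.eq_symm_apply]

lemma permPoly_eq_hRep (hm : 0 < m) :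
    permPoly m (fun i => if i.1 < m - 1 then m else 0) = hRep m := by
  let last : Fin m := ⟨m - 1, by omega⟩
  have hlam (i : Fin m) : (((if i.1 < m - 1 then m else 0 : ℕ)) : ℝ) = vertex m last i := by
    have := i.isLt
    simp only [vertex, Fin.ext_iff, last]
    split_ifs <;> first | omega | simp
  rw [permPoly, ← convexHull_range_vertex hm]
  congr 1
  ext x
  simp only [hlam, vertex_comp_perm, Set.mem_ofPred_eq, Set.mem_range]
  constructor
  · rintro ⟨σ, rfl⟩
    exact ⟨σ.symm last, rfl⟩
  · rintro ⟨j, rfl⟩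
    exact ⟨Equiv.swap j last, by simp⟩

lemma sum_eq_of_mem_affineSpan_hRep {y : Fin m → ℝ} (hy : y ∈ affineSpan ℝ (hRep m)) :
    ∑ i, y i = m * ((m : ℝ) - 1) := by
  refine affineSpan_induction hy (fun x hx => hx.1) fun c u v w hu hv hw => ?_
  simp only [vsub_eq_sub, vadd_eq_add, Pi.add_apply, Pi.smul_apply, Pi.sub_apply, smul_eq_mul,
      sum_add_distrib, ← mul_sum, sum_sub_distrib, hu, hv, hw]
  ring

lemma affineIndependent_vertex (hm : 0 < m) : AffineIndependent ℝ (vertex m) := by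
  rw [affineIndependent_iff]
  intro s w hsum hzero e he
  have hc := congrFun hzero e
  have h1 : ∀ j ∈ s, (w j • vertex m j) e = w j * m - (if e = j then w j * m else 0) := by
    intro j _
    by_cases h : e = j <;> simp [vertex, h]
  rw [Finset.sum_apply, sum_congr rfl h1, sum_sub_distrib, ← sum_mul, hsum,
    sum_ite_eq s e fun j => w j * m, if_pos he, zero_mul, zero_sub, Pi.zero_apply,
    neg_eq_zero] at hc
  exact (mul_eq_zero.mp hc).resolve_right (by positivity)

lemma finrank_vectorSpan_hRep (hm : 0 < m) : finrank ℝ (vectorSpan ℝ (hRep m)) = m - 1 := by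
  rw [← convexHull_range_vertex hm, ← direction_affineSpan, affineSpan_convexHull,
    direction_affineSpan]
  exact (affineIndependent_vertex hm).finrank_vectorSpan (by simp; omega)

open Topology in
lemma mem_intrinsicInterior_hRep_iff {x : Fin m → ℝ} :
    x ∈ intrinsicInterior ℝ (hRep m) ↔ ∑ i, x i = m * ((m : ℝ) - 1) ∧ ∀ i, x i < m := by
  constructor
  · intro hx
    have hxS : x ∈ hRep m := intrinsicInterior_subset hx
    refine ⟨hxS.1, fun i => (hxS.2 i).lt_of_ne fun hxi => ?_⟩
    obtain ⟨y, hy, rfl⟩ := hx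
    -- moving from `vertex m i` through `y` and beyond pushes the `i`-th coordinate past `m`
    let γ : ℝ → affineSpan ℝ (hRep m) := fun t =>
      ⟨AffineMap.lineMap (vertex m i) y (1 + t),
        AffineMap.lineMap_mem _ (mem_affineSpan ℝ (vertex_mem_hRep i)) y.2⟩
    have hγ : Continuous γ :=
      (AffineMap.lineMap_continuous.comp (continuous_const.add continuous_id)).subtype_mk _
    have hγ0 : γ 0 = y := Subtype.ext (by simp [γ])
    have hev : ∀ᶠ t in 𝓝[>] (0 : ℝ), γ t ∈ (↑) ⁻¹' hRep m := nhdsWithin_le_nhds <|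
      hγ.continuousAt.preimage_mem_nhds (hγ0 ▸ mem_interior_iff_mem_nhds.1 hy)
    obtain ⟨t, ht, ht0⟩ := (hev.and self_mem_nhdsWithin).exists
    have hti : (1 + t) * m ≤ m := by simpa [γ, AffineMap.lineMap_apply, vertex, hxi] using ht.2 i
    have hm : (0 : ℝ) < m := by exact_mod_cast i.pos
    nlinarith
  · rintro ⟨hsum, hlt⟩
    let U : Set (Fin m → ℝ) := ⋂ i, {y | y i < m}
    have hU : IsOpen U :=
      isOpen_iInter_of_finite fun i => isOpen_lt (continuous_apply i) continuous_const
    have hUS : ∀ y ∈ affineSpan ℝ (hRep m), y ∈ U → y ∈ hRep m := fun y hy hyU =>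
      ⟨sum_eq_of_mem_affineSpan_hRep hy, fun i => (Set.mem_iInter.1 hyU i).le⟩
    have hxS : x ∈ hRep m := ⟨hsum, fun i => (hlt i).le⟩
    refine ⟨⟨x, mem_affineSpan ℝ hxS⟩, mem_interior.2 ⟨_, fun y hy => hUS y y.2 hy,
      hU.preimage continuous_subtype_val, Set.mem_iInter.2 hlt⟩, rfl⟩

lemma eq_const_of_lt_of_sum_eq {q : Fin m → ℤ} (hlt : ∀ i, (q i : ℝ) < m)
    (hsum : ∑ i, (q i : ℝ) = m * ((m : ℝ) - 1)) : q = fun _ => (m : ℤ) - 1 := by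
  have hle : ∀ i ∈ univ, q i ≤ (m : ℤ) - 1 := fun i _ => by
    have : q i < m := by exact_mod_cast hlt i
    omega
  have hsumℤ : ∑ i, q i = ∑ _i : Fin m, ((m : ℤ) - 1) := by
    simp only [sum_const, card_univ, Fintype.card_fin, nsmul_eq_mul]
    exact_mod_cast hsum
  exact funext fun i => (sum_eq_sum_iff_of_le hle).1 hsumℤ i (mem_univ i)

lemma eq_of_isMaxOn_hRep {f : (Fin m → ℝ) →ₗ[ℝ] ℝ} {x : Fin m → ℝ} (hx : x ∈ hRep m)
    (hmax : IsMaxOn f (hRep m) x) {j k : Fin m}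
    (hjk : f (Pi.single j 1) < f (Pi.single k 1)) : x k = m := by
  have hne : j ≠ k := by rintro rfl; exact lt_irrefl _ hjk
  by_contra hxk
  set t := (m : ℝ) - x k
  have ht : 0 < t := sub_pos.2 ((hx.2 k).lt_of_ne hxk)
  -- shifting `t` from coordinate `j` to coordinate `k` stays in `hRep m` and increases `f`
  set y := x + t • (Pi.single k 1 - Pi.single j 1)
  have hy : y ∈ hRep m := by
    refine ⟨by simp [y, sum_add_distrib, hx.1, ← mul_sum, sum_sub_distrib], fun i => ?_⟩
    by_cases hik : i = k
    · subst hik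
      simp [y, hne.symm, t]
    · by_cases hij : i = j
      · subst hij
        simpa [y, hik] using (hx.2 i).trans (le_add_of_nonneg_right ht.le)
      · simpa [y, hik, hij] using hx.2 i
  have := isMaxOn_iff.1 hmax y hy
  simp only [y, map_add, map_smul, map_sub, smul_eq_mul] at this
  nlinarith

lemma mem_affineSpan_vertex_image (hm : 0 < m) {A : Set (Fin m)} {u : Fin m → ℝ}
    (hu : ∑ i, u i = m * ((m : ℝ) - 1)) (hA : ∀ k ∉ A, u k = m) :
    u ∈ affineSpan ℝ (vertex m '' A) := by
  rw [← sum_barycentric_smul_vertex hm hu,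
    ← affineCombination_eq_linear_combination _ _ _ (sum_barycentric hm hu)]
  exact affineCombination_mem_affineSpan_image (sum_barycentric hm hu)
    (fun k _ hk => by simp [hA k hk]) _

lemma exists_apply_eq_mul_sum_add_of_facet (hm : 2 ≤ m) (f : (Fin m → ℝ) →ₗ[ℝ] ℝ)
    (hdim : finrank ℝ (vectorSpan ℝ {x ∈ hRep m | ∀ y ∈ hRep m, f y ≤ f x}) + 1 =
      finrank ℝ (vectorSpan ℝ (hRep m))) :
    ∃ (i : Fin m) (μ a : ℝ), 0 ≤ a ∧ ∀ u, f u = μ * ∑ k, u k + a * u i := by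
  classical
  set c : Fin m → ℝ := fun k => f (Pi.single k 1)
  have huniv : (univ : Finset (Fin m)).Nonempty := univ_nonempty_iff.2 ⟨⟨0, by omega⟩⟩
  obtain ⟨j, -, hj⟩ := exists_min_image univ c huniv
  obtain ⟨i, -, hi⟩ := exists_max_image univ c huniv
  set A := univ.filter fun k => c k = c j
  have hjA : j ∈ A := by simp [A]
  -- a maximiser has `x k = m` for `k ∉ A`, so the face lies in the affine span of the
  -- vertices indexed by `A`, and its dimension forces `m - 1 ≤ #A`
  have hspan : vectorSpan ℝ {x ∈ hRep m | ∀ y ∈ hRep m, f y ≤ f x} ≤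
      vectorSpan ℝ (A.image (vertex m) : Set (Fin m → ℝ)) := by
    rw [← direction_affineSpan, ← direction_affineSpan, coe_image]
    refine AffineSubspace.direction_le (affineSpan_le.2 fun x hx =>
      mem_affineSpan_vertex_image (by omega) hx.1.1 fun k hk =>
        eq_of_isMaxOn_hRep hx.1 (isMaxOn_iff.2 hx.2) ((hj k (mem_univ k)).lt_of_ne ?_))
    simpa [A, eq_comm] using hk
  have hA : m - 1 ≤ #A := by
    have hA0 := card_pos.2 ⟨j, hjA⟩
    have hF : finrank ℝ (vectorSpan ℝ {x ∈ hRep m | ∀ y ∈ hRep m, f y ≤ f x}) ≤ #A - 1 :=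
      (Submodule.finrank_mono hspan).trans
        (finrank_vectorSpan_image_finset_le ℝ (vertex m) A (by omega))
    rw [finrank_vectorSpan_hRep (by omega)] at hdim
    omega
  have hconst : ∀ k ≠ i, c k = c j := by
    intro k hki
    by_contra hk
    have hsub : {k, i} ⊆ Aᶜ := by
      intro l hl
      have hlt : c j < c k := (hj k (mem_univ k)).lt_of_ne' hk
      rcases mem_insert.1 hl with rfl | hl
      · simpa [A] using hk
      · rw [mem_singleton.1 hl]
        simpa [A] using (hlt.trans_le (hi k (mem_univ k))).ne'
    have := card_le_card hsub
    rw [card_pair hki, card_compl, Fintype.card_fin] at this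
    omega
  refine ⟨i, c j, c i - c j, sub_nonneg.2 (hj i (mem_univ i)), fun u => ?_⟩
  calc f u = ∑ k, u k * c j + ∑ k, u k * (c k - c j) := by
        rw [f.apply_eq_sum_mul_apply_single, ← sum_add_distrib]
        exact sum_congr rfl fun k _ => by ring
    _ = c j * ∑ k, u k + (c i - c j) * u i := by
        rw [sum_eq_single (f := fun k => u k * (c k - c j)) i
          (fun k _ hk => by rw [hconst k hk, sub_self, mul_zero]) (by simp), ← sum_mul]
        ring

lemma not_between_of_facet (hm : 2 ≤ m) {f : (Fin m → ℝ) →ₗ[ℝ] ℝ}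
    (hdim : finrank ℝ (vectorSpan ℝ {x ∈ hRep m | ∀ y ∈ hRep m, f y ≤ f x}) + 1 =
      finrank ℝ (vectorSpan ℝ (hRep m))) {x : Fin m → ℝ} (hx : x ∈ hRep m)
    {z : Fin m → ℤ} (hz : (fun i => (z i : ℝ)) ∈ affineSpan ℝ (hRep m)) :
    ¬(f (fun _ => (m : ℝ) - 1) < f (fun i => (z i : ℝ)) ∧ f (fun i => (z i : ℝ)) < f x) := by
  obtain ⟨i, μ, a, ha, hf⟩ := exists_apply_eq_mul_sum_add_of_facet hm f hdim
  rintro ⟨h1, h2⟩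
  rw [hf, hf, sum_eq_of_mem_affineSpan_hRep hz, sum_const, card_univ, Fintype.card_fin,
    nsmul_eq_mul] at h1
  rw [hf, hf, sum_eq_of_mem_affineSpan_hRep hz, hx.1] at h2
  have hz1 : (m : ℝ) - 1 < z i := lt_of_mul_lt_mul_left (by linarith) ha
  have hz2 : (z i : ℝ) < m := lt_of_mul_lt_mul_left (by nlinarith [hx.2 i]) ha
  have : (m : ℤ) - 1 < z i := by exact_mod_cast hz1
  have : z i < m := by exact_mod_cast hz2
  omega

end PermutohedronMM0

open PermutohedronMM0

/-- For `m ≥ 2` and `λ = (m, ..., m, 0)` (with `m − 1` parts equal to `m`), the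
`λ`-permutohedron `P_λ^m` is reflexive: `(m−1, ..., m−1)` is its unique relative
interior lattice point and it is at lattice distance 1 from each facet. -/
theorem permutohedron_mm0_reflexive (m : ℕ) (hm : 2 ≤ m) :
    ReflexivePolytope m (permPoly m (fun i => if i.1 < m - 1 then m else 0))
      (fun _ => (m : ℤ) - 1) := by
  have hp : (fun i : Fin m => (((fun _ => (m : ℤ) - 1) i : ℤ) : ℝ)) = fun _ => (m : ℝ) - 1 := by
    ext
    push_cast
    rfl
  rw [ReflexivePolytope, permPoly_eq_hRep (by omega), hp]
  refine ⟨?_, fun q hq => ?_, ?_⟩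
  · exact mem_intrinsicInterior_hRep_iff.2 ⟨by simp [mul_sub], fun _ => by linarith⟩
  · obtain ⟨hsum, hlt⟩ := mem_intrinsicInterior_hRep_iff.1 hq
    exact eq_const_of_lt_of_sum_eq hlt hsum
  · rintro f F - rfl hdim x hx z hz
    exact not_between_of_facet hm hdim hx.1 hz
end
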